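/- Fix n ≥ 1 and m ≥ 1, and let d_{n,m} be the number of descents of the random permutation produced by an m-shelf shuffle of n cards. Then there exists, on the same probability space, a random variable B_{n,m} with the Binomial(n, 1/2) distribution such that |d_{n,m} − B_{n,m}| ≤ 4m − 1 almost surely. -/

import Mathlib

/-
The random variable `B` is the number of cards put into even-labelled piles; each card lands
there independently with probability `1/2`, so `B` is `Binomial(n, 1/2)`. Along the shuffled deck
the pile labels are nondecreasing, a reversed (even-labelled) pile of size `s` contributes exactly
`s - 1` descents, an increasing pile none, and each of the at most `2m - 1` boundaries between
consecutive piles at most one. Hence `B - m ≤ d ≤ B + (2m - 1)`.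
-/

open MeasureTheory ProbabilityTheory Finset Filter

/-- The uniform probability measure on a finite type. -/
noncomputable def uniformM (α : Type*) [Fintype α] [MeasurableSpace α] : Measure α :=
  ((Fintype.card α : ENNReal))⁻¹ • Measure.count

/-- The pile label (in `{1, …, 2m}`) of card `i` under the pile assignment `w`
(pile indices in `Fin (2*m)` are 0-based, so pile `k` carries label `k + 1`).
Under the uniform measure on words, `fun w => Xval w i` are i.i.d. uniform on `{1, …, 2m}`. -/
def Xval {m n : ℕ} (w : Fin n → Fin (2*m)) (i : Fin n) : ℕ := (w i : ℕ) + 1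

/-- Sorting key of card `i` in an `m`-shelf shuffle with pile assignment `w`:
cards are ordered first by pile label; within an odd-labeled pile they keep their
increasing order, and within an even-labeled pile their order is reversed. -/
noncomputable def shelfKey {m n : ℕ} (w : Fin n → Fin (2*m)) (i : Fin n) :
    Lex (Fin (2*m) × ℤ) :=
  toLex (w i, if Even (Xval w i) then -(i : ℤ) else (i : ℤ))

/-- The permutation of `{1, …, n}` (0-based: of `Fin n`) produced by an `m`-shelf shuffle
with pile assignment `w`: position `p` of the shuffled deck holds card `shelfPerm w p`. -/
noncomputable def shelfPerm {m n : ℕ} (w : Fin n → Fin (2*m)) : Equiv.Perm (Fin n) :=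
  Tuple.sort (shelfKey w)

/-- The number of inversions of a permutation: pairs `i < j` with `π i > π j`. -/
def invCount {n : ℕ} (π : Equiv.Perm (Fin n)) : ℕ :=
  ((Finset.univ : Finset (Fin n × Fin n)).filter
    (fun p => p.1 < p.2 ∧ π p.2 < π p.1)).card

/-- `I_{n,m}`: the number of inversions after an `m`-shelf shuffle of `n` cards,
as a random variable on the space of pile-assignment words. -/
noncomputable def shelfInv (m n : ℕ) (w : Fin n → Fin (2*m)) : ℕ := invCount (shelfPerm w)

/-- The number of descents of a permutation: indices `i` with `π i > π (i+1)`. -/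
def desCount {n : ℕ} (π : Equiv.Perm (Fin n)) : ℕ :=
  ((Finset.univ : Finset (Fin n × Fin n)).filter
    (fun p => (p.1 : ℕ) + 1 = (p.2 : ℕ) ∧ π p.2 < π p.1)).card

/-- `d_{n,m}`: the number of descents after an `m`-shelf shuffle of `n` cards,
as a random variable on the space of pile-assignment words. -/
noncomputable def shelfDes (m n : ℕ) (w : Fin n → Fin (2*m)) : ℕ := desCount (shelfPerm w)
lemma card_filter_card_filter_eq {ι β : Type*} [Fintype ι] [DecidableEq ι] [Fintype β]
    (P : β → Prop) [DecidablePred P] (k : ℕ) :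
    #{f : ι → β | #{i | P (f i)} = k}
      = (Fintype.card ι).choose k * #{b | P b} ^ k * #{b | ¬ P b} ^ (Fintype.card ι - k) := by
  rw [card_eq_sum_card_fiberwise (f := fun f : ι → β => ({i | P (f i)} : Finset ι))
    (t := powersetCard k univ)
    (fun f hf => mem_powersetCard.2 ⟨subset_univ _, (mem_filter.1 hf).2⟩)]
  have fiber : ∀ T ∈ powersetCard k (univ : Finset ι),
      #{f ∈ ({f : ι → β | #{i | P (f i)} = k} : Finset _) | ({i | P (f i)} : Finset ι) = T}
        = #{b | P b} ^ k * #{b | ¬ P b} ^ (Fintype.card ι - k) := by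
    intro T hT
    obtain ⟨-, hTk⟩ := mem_powersetCard.1 hT
    have hfiber :
        {f ∈ ({f : ι → β | #{i | P (f i)} = k} : Finset _) | ({i | P (f i)} : Finset ι) = T} =
          Fintype.piFinset fun i => ({b | P b ↔ i ∈ T} : Finset β) := by
      ext f
      simp only [mem_filter, mem_univ, true_and, Fintype.mem_piFinset, Finset.ext_iff]
      exact ⟨fun h i => h.2 i, fun h => ⟨by rw [← hTk]; congr 1; ext i; simp [h i], h⟩⟩
    have hin : #{i | i ∈ T} = k := by rw [filter_mem_eq_inter, univ_inter, hTk]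
    have hout : #{i | i ∉ T} = Fintype.card ι - k := by
      rw [← hin, ← card_univ, ← card_filter_add_card_filter_not (s := univ) fun i => i ∈ T]
      omega
    have hcoord (i : ι) :
        #({b | P b ↔ i ∈ T} : Finset β) = if i ∈ T then #{b | P b} else #{b | ¬ P b} := by
      split_ifs with hi <;> simp [hi]
    rw [hfiber, Fintype.card_piFinset, Finset.prod_congr rfl fun i _ => hcoord i, prod_ite,
      prod_const, prod_const, hin, hout]
  rw [sum_congr rfl fiber, sum_const, card_powersetCard, card_univ, smul_eq_mul, mul_assoc]

lemma uniformM_apply_finset {α : Type*} [Fintype α] [MeasurableSpace α]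
    [MeasurableSingletonClass α] (s : Finset α) :
    uniformM α s = #s / Fintype.card α := by
  rw [uniformM, Measure.smul_apply, smul_eq_mul, Measure.count_apply_finset,
    ENNReal.div_eq_inv_mul]

lemma uniformM_card_filter_eq {ι β : Type*} [Fintype ι] [DecidableEq ι] [Fintype β]
    [Nonempty β] [MeasurableSpace β] [MeasurableSingletonClass β]
    (P : β → Prop) [DecidablePred P] (hP : #{b | P b} = #{b | ¬ P b}) (k : ℕ) :
    uniformM (ι → β) {f | #{i | P (f i)} = k}
      = (Fintype.card ι).choose k * (1 / 2) ^ Fintype.card ι := by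
  set n := Fintype.card ι
  set a := #{b | P b}
  have hβ : Fintype.card β = 2 * a := by
    rw [← card_univ, ← card_filter_add_card_filter_not (s := univ) P, ← hP, two_mul]
  have ha : a ≠ 0 := by have := Fintype.card_pos (α := β); omega
  have hcount : n.choose k * a ^ k * a ^ (n - k) = n.choose k * a ^ n := by
    rcases le_or_gt k n with hk | hk
    · rw [mul_assoc, ← pow_add, Nat.add_sub_cancel' hk]
    · simp [Nat.choose_eq_zero_of_lt hk]
  rw [← coe_filter_univ, uniformM_apply_finset, card_filter_card_filter_eq, ← hP, hcount,
    Fintype.card_fun, hβ, mul_pow]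
  push_cast
  rw [ENNReal.mul_div_mul_right _ _ (pow_ne_zero _ (by exact_mod_cast ha)) (by simp)]
  simp [div_eq_mul_inv, ENNReal.inv_pow, n]

def adjPairs (n : ℕ) : Finset (Fin n × Fin n) := {p | (p.1 : ℕ) + 1 = p.2}

lemma mem_adjPairs {n : ℕ} {p : Fin n × Fin n} : p ∈ adjPairs n ↔ (p.1 : ℕ) + 1 = p.2 := by
  simp [adjPairs]

lemma adjPairs_injOn_snd (n : ℕ) : Set.InjOn Prod.snd (adjPairs n : Set (Fin n × Fin n)) := by
  intro p hp q hq h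
  rw [mem_coe, mem_adjPairs] at hp hq
  have : (p.2 : ℕ) = q.2 := congrArg Fin.val h
  exact Prod.ext (Fin.ext (by omega)) h

section Monotone

variable {α : Type*} [LinearOrder α] {n : ℕ} {f : Fin n → α}

/-- The upper values of the ascents are distinct and differ from `f 0`. -/
lemma card_adjPairs_lt_le [Fintype α] (hf : Monotone f) :
    #{p ∈ adjPairs n | f p.1 < f p.2} ≤ Fintype.card α - 1 := by
  rcases n with _ | n
  · simp [adjPairs]
  set S := {p ∈ adjPairs (n + 1) | f p.1 < f p.2}
  have mem_S {p} : p ∈ S ↔ (p.1 : ℕ) + 1 = p.2 ∧ f p.1 < f p.2 := by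
    rw [mem_filter, mem_adjPairs]
  have hlt : ∀ p ∈ S, ∀ q ∈ S, p.2 < q.2 → f p.2 < f q.2 := by
    intro p hp q hq hpq
    rw [mem_S] at hp hq
    exact (hf (Fin.le_def.2 (by rw [Fin.lt_def] at hpq; omega))).trans_lt hq.2
  calc #S ≤ #(univ.erase (f 0)) := by
        refine card_le_card_of_injOn (fun p => f p.2) (fun p hp => ?_) fun p hp q hq h => ?_
        · exact mem_erase.2 ⟨((hf (Fin.zero_le _)).trans_lt (mem_S.1 hp).2).ne', mem_univ _⟩
        · refine adjPairs_injOn_snd _ (mem_filter.1 hp).1 (mem_filter.1 hq).1 ?_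
          by_contra hne
          rcases lt_or_gt_of_ne hne with h' | h'
          · exact (hlt p hp q hq h').ne h
          · exact (hlt q hq p hp h').ne h.symm
    _ = Fintype.card α - 1 := by rw [card_erase_of_mem (mem_univ _), card_univ]

variable (P : α → Prop) [DecidablePred P]

lemma card_adjPairs_eq_le :
    #{p ∈ adjPairs n | f p.1 = f p.2 ∧ P (f p.1)} ≤ #{i | P (f i)} :=
  card_le_card_of_injOn Prod.snd
    (fun p hp => by
      obtain ⟨-, heq, hP⟩ := mem_filter.1 hp
      exact mem_filter.2 ⟨mem_univ _, heq ▸ hP⟩)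
    fun p hp q hq => adjPairs_injOn_snd n (mem_filter.1 hp).1 (mem_filter.1 hq).1

/-- Each position satisfying `P` either starts a block of equal values, and there are at most
`#{a | P a}` such blocks, or is the second entry of an adjacent pair inside a block. -/
lemma card_le_card_adjPairs_eq_add [Fintype α] (hf : Monotone f) :
    #{i | P (f i)} ≤ #{p ∈ adjPairs n | f p.1 = f p.2 ∧ P (f p.1)} + #{a | P a} := by
  rw [← card_filter_add_card_filter_not (p := fun i => ∃ j < i, f j = f i), filter_filter,
    filter_filter]
  gcongr ?_ + ?_
  · refine card_le_card_of_surjOn Prod.snd fun i hi => ?_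
    obtain ⟨-, hPi, j, hji, hj⟩ := mem_filter.1 hi
    have hi0 : (j : ℕ) < i := hji
    let p : Fin n × Fin n := (⟨i - 1, by omega⟩, i)
    have hp : f p.1 = f p.2 :=
      le_antisymm (hf (Fin.le_def.2 (show (i : ℕ) - 1 ≤ i by omega)))
        (hj ▸ hf (Fin.le_def.2 (show (j : ℕ) ≤ i - 1 by omega)))
    have hadj : p ∈ adjPairs n := mem_adjPairs.2 (show (i : ℕ) - 1 + 1 = i by omega)
    exact ⟨p, mem_filter.2 ⟨hadj, hp, hp ▸ hPi⟩, rfl⟩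
  · refine card_le_card_of_injOn f
      (fun i hi => mem_filter.2 ⟨mem_univ _, (mem_filter.1 hi).2.1⟩) fun i hi j hj h => ?_
    obtain ⟨-, -, hi⟩ := mem_filter.1 hi
    obtain ⟨-, -, hj⟩ := mem_filter.1 hj
    by_contra hne
    rcases lt_or_gt_of_ne hne with h' | h'
    · exact hj ⟨i, h', h⟩
    · exact hi ⟨j, h', h.symm⟩

end Monotone

lemma card_odd_eq_card_not_odd_fin_two_mul (m : ℕ) :
    #{v : Fin (2 * m) | Odd (v : ℕ)} = #{v : Fin (2 * m) | ¬ Odd (v : ℕ)} := by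
  refine card_equiv Fin.revPerm fun v => ?_
  simp only [mem_filter, mem_univ, true_and, Fin.revPerm_apply, Fin.val_rev, Nat.odd_iff]
  omega

lemma card_odd_fin_two_mul (m : ℕ) : #{v : Fin (2 * m) | Odd (v : ℕ)} = m := by
  have hflip := card_odd_eq_card_not_odd_fin_two_mul m
  have htotal := card_filter_add_card_filter_not (s := univ) fun v : Fin (2 * m) => Odd (v : ℕ)
  rw [card_univ, Fintype.card_fin] at htotal
  omega

section Shelf

variable {m n : ℕ} (w : Fin n → Fin (2 * m))

lemma even_Xval_iff (i : Fin n) : Even (Xval w i) ↔ Odd (w i : ℕ) := by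
  simp [Xval, Nat.even_add_one]

lemma shelfKey_injective : Function.Injective (shelfKey w) := by
  intro i j h
  obtain ⟨hw, hkey⟩ := Prod.ext_iff.1 (toLex.injective h)
  simp only [Xval] at hkey
  split_ifs at hkey <;> exact Fin.ext (by omega)

lemma monotone_shelfPerm_pile : Monotone (w ∘ shelfPerm w) :=
  Prod.Lex.monotone_fst_ofLex.comp (Tuple.monotone_sort (shelfKey w))

/-- A pile with odd `0`-based index is even-labelled, hence reversed. -/
lemma shelfPerm_lt_shelfPerm_iff {p q : Fin n} (hpq : p < q)
    (hpile : w (shelfPerm w p) = w (shelfPerm w q)) :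
    shelfPerm w q < shelfPerm w p ↔ Odd (w (shelfPerm w p) : ℕ) := by
  have hkey : shelfKey w (shelfPerm w p) < shelfKey w (shelfPerm w q) :=
    (Tuple.monotone_sort _).strictMono_of_injective
      ((shelfKey_injective w).comp (Equiv.injective _)) hpq
  simp only [shelfKey, Prod.Lex.toLex_lt_toLex, even_Xval_iff, ← hpile, lt_irrefl, false_or,
    true_and] at hkey
  split_ifs at hkey with hodd <;> simp only [hodd, iff_true, iff_false, Fin.lt_def] <;> omega

lemma desCount_eq_card_adjPairs (π : Equiv.Perm (Fin n)) :
    desCount π = #{p ∈ adjPairs n | π p.2 < π p.1} := by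
  rw [desCount, adjPairs, filter_filter]

lemma card_filter_comp_shelfPerm (P : Fin (2 * m) → Prop) [DecidablePred P] :
    #{p | P (w (shelfPerm w p))} = #{i | P (w i)} :=
  card_equiv (shelfPerm w) fun p => by simp

lemma adjPairs_reversed_subset_descents :
    {p ∈ adjPairs n |
        w (shelfPerm w p.1) = w (shelfPerm w p.2) ∧ Odd (w (shelfPerm w p.1) : ℕ)}
      ⊆ {p ∈ adjPairs n | shelfPerm w p.2 < shelfPerm w p.1} := by
  intro p hp
  obtain ⟨hadj, hpile, hodd⟩ := mem_filter.1 hp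
  have hpq : p.1 < p.2 := Fin.lt_def.2 (by rw [mem_adjPairs] at hadj; omega)
  exact mem_filter.2 ⟨hadj, (shelfPerm_lt_shelfPerm_iff w hpq hpile).2 hodd⟩

lemma descents_subset_reversed_union_ascents :
    {p ∈ adjPairs n | shelfPerm w p.2 < shelfPerm w p.1}
      ⊆ {p ∈ adjPairs n |
        w (shelfPerm w p.1) = w (shelfPerm w p.2) ∧ Odd (w (shelfPerm w p.1) : ℕ)}
        ∪ {p ∈ adjPairs n | w (shelfPerm w p.1) < w (shelfPerm w p.2)} := by
  intro p hp
  obtain ⟨hadj, hdes⟩ := mem_filter.1 hp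
  have hpq : p.1 < p.2 := Fin.lt_def.2 (by rw [mem_adjPairs] at hadj; omega)
  rcases (monotone_shelfPerm_pile w hpq.le).lt_or_eq with hlt | hpile
  · exact mem_union_right _ (mem_filter.2 ⟨hadj, hlt⟩)
  · exact mem_union_left _
      (mem_filter.2 ⟨hadj, hpile, (shelfPerm_lt_shelfPerm_iff w hpq hpile).1 hdes⟩)

lemma shelfDes_le_card_odd_add : shelfDes m n w ≤ #{i | Odd (w i : ℕ)} + (2 * m - 1) := by
  have hascents := card_adjPairs_lt_le (monotone_shelfPerm_pile w)
  rw [Fintype.card_fin] at hascents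
  rw [← card_filter_comp_shelfPerm w fun v => Odd (v : ℕ), shelfDes, desCount_eq_card_adjPairs]
  exact (card_le_card (descents_subset_reversed_union_ascents w)).trans
    ((card_union_le _ _).trans
      (add_le_add (card_adjPairs_eq_le (f := w ∘ shelfPerm w) fun v => Odd (v : ℕ)) hascents))

lemma card_odd_le_shelfDes_add : #{i | Odd (w i : ℕ)} ≤ shelfDes m n w + m := by
  have hblocks := card_le_card_adjPairs_eq_add (fun v : Fin (2 * m) => Odd (v : ℕ))
    (monotone_shelfPerm_pile w)
  rw [card_odd_fin_two_mul] at hblocks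
  rw [← card_filter_comp_shelfPerm w fun v => Odd (v : ℕ), shelfDes, desCount_eq_card_adjPairs]
  exact hblocks.trans (add_le_add_left (card_le_card (adjPairs_reversed_subset_descents w)) _)

end Shelf

theorem descents_binomial_coupling_general (n m : ℕ) (hm : 1 ≤ m) :
    ∃ B : (Fin n → Fin (2*m)) → ℕ,
      (∀ k : ℕ, (uniformM (Fin n → Fin (2*m))) {w | B w = k}
          = (n.choose k : ENNReal) * (1/2)^n) ∧
      (∀ᵐ w ∂(uniformM (Fin n → Fin (2*m))),
        |(shelfDes m n w : ℤ) - (B w : ℤ)| ≤ 4 * (m : ℤ) - 1) := by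
  refine ⟨fun w => #{i | Odd (w i : ℕ)}, fun k => ?_, ae_of_all _ fun w => ?_⟩
  · have : Nonempty (Fin (2 * m)) := ⟨⟨0, by omega⟩⟩
    simpa using uniformM_card_filter_eq (ι := Fin n) _ (card_odd_eq_card_not_odd_fin_two_mul m) k
  · have hupper := shelfDes_le_card_odd_add w
    have hlower := card_odd_le_shelfDes_add w
    dsimp only
    rw [abs_le]
    omega

/-- For `n ≥ 1`, `m ≥ 1`, there exists on the same probability space
(the space of uniform pile-assignment words) a random variable `B_{n,m}` with the
`Binomial(n, 1/2)` distribution such that `|d_{n,m} − B_{n,m}| ≤ 4m − 1` almost surely. -/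
theorem descents_binomial_coupling (n m : ℕ) (hn : 1 ≤ n) (hm : 1 ≤ m) :
    ∃ B : (Fin n → Fin (2*m)) → ℕ,
      (∀ k : ℕ, (uniformM (Fin n → Fin (2*m))) {w | B w = k}
          = (n.choose k : ENNReal) * (1/2)^n) ∧
      (∀ᵐ w ∂(uniformM (Fin n → Fin (2*m))),
        |(shelfDes m n w : ℤ) - (B w : ℤ)| ≤ 4 * (m : ℤ) - 1) :=
  descents_binomial_coupling_general n m hm
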